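/- Let β ∈ (0,1] and ν > 0, and define the weight function Ũ_{1,β,ν}(x) = (1/(β²Γ(ν))) ∫_0^∞ t^{ν/β−2} exp(−t^{1/β} − x/(βt)) dt for x > 0. Then Ũ_{1,β,ν} is nonnegative and solves the Stieltjes moment problem for the Wright-case generalized factorial: for every n ∈ ℕ, ∫_0^∞ x^n Ũ_{1,β,ν}(x) dx = β^n · n! · Γ(βn+ν)/Γ(ν) = [n]_{1,β,ν}!. -/

import Mathlib

open MeasureTheory

/-- The generalized factorial `[n]_{α,β,ν}!`. -/
noncomputable def genFact (α β ν : ℝ) (n : ℕ) : ℝ :=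
  (∏ i ∈ Finset.Icc 1 n, Real.Gamma (β * i + 1) / Real.Gamma (β * i + 1 - α)) *
    (Real.Gamma (β * n + 1 - α + ν) / Real.Gamma (1 - α + ν))

/-- The weight function `Ũ_{1,β,ν}` for the Wright case `α = 1`. -/
noncomputable def wrightWeight (β ν : ℝ) (x : ℝ) : ℝ :=
  (1 / (β ^ 2 * Real.Gamma ν)) *
    ∫ t in Set.Ioi (0 : ℝ), t ^ (ν / β - 2) * Real.exp (-(t ^ (1 / β)) - x / (β * t))

/-!
`Ũ_{1,β,ν}` is a scale mixture of exponential densities, `Ũ(x) = ∫ w(t) e^{-x/(βt)} dt` with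
`w(t) = t^{ν/β-2} e^{-t^{1/β}} / (β²Γ(ν)) ≥ 0`. By Fubini–Tonelli its `n`-th moment is
`n! β^{n+1} ∫ t^{n+1} w(t) dt`, and the substitution `u = t^{1/β}` turns the last integral into
`β Γ(βn+ν) / (β²Γ(ν))`. For `α = 1` each factor `Γ(βi+1)/Γ(βi)` of `[n]!` is `βi`.
-/

open Set Real
open scoped Nat

lemma integral_pow_mul_exp_neg_div_Ioi (n : ℕ) {c : ℝ} (hc : 0 < c) :
    ∫ x in Ioi (0 : ℝ), x ^ n * exp (-(x / c)) = n ! * c ^ (n + 1) := by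
  have h := integral_rpow_mul_exp_neg_mul_Ioi (a := (n : ℝ) + 1) (by positivity) (inv_pos.2 hc)
  simp_rw [add_sub_cancel_right, rpow_natCast, inv_mul_eq_div, one_div, inv_inv,
    Gamma_nat_eq_factorial] at h
  rw [h, mul_comm, ← Nat.cast_succ, rpow_natCast]

lemma integrableOn_pow_mul_exp_neg_div_Ioi (n : ℕ) {c : ℝ} (hc : 0 < c) :
    IntegrableOn (fun x : ℝ ↦ x ^ n * exp (-(x / c))) (Ioi 0) :=
  .of_integral_ne_zero (by rw [integral_pow_mul_exp_neg_div_Ioi n hc]; positivity)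

lemma integral_pow_mul_rpow_mul_exp_neg_rpow {p s : ℝ} (hp : 0 < p) (n : ℕ)
    (hs : -1 < s + n) :
    ∫ t in Ioi (0 : ℝ), t ^ n * (t ^ s * exp (-t ^ p)) = 1 / p * Gamma ((s + n + 1) / p) := by
  rw [← integral_rpow_mul_exp_neg_rpow hp hs]
  refine setIntegral_congr_fun measurableSet_Ioi fun t ht ↦ ?_
  rw [rpow_add_natCast (ne_of_gt ht)]
  ring

lemma integrableOn_pow_mul_rpow_mul_exp_neg_rpow {p s : ℝ} (hp : 0 < p) (n : ℕ)
    (hs : -1 < s + n) :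
    IntegrableOn (fun t : ℝ ↦ t ^ n * (t ^ s * exp (-t ^ p))) (Ioi 0) :=
  .of_integral_ne_zero <| by
    rw [integral_pow_mul_rpow_mul_exp_neg_rpow hp n hs]
    exact (mul_pos (by positivity) (Gamma_pos_of_pos (div_pos (by linarith) hp))).ne'

theorem integral_integral_swap_of_nonneg {α β : Type*} [MeasurableSpace α] [MeasurableSpace β]
    {μ : Measure α} {ν : Measure β} [SFinite μ] [SFinite ν] {f : α → β → ℝ}
    (hf : AEStronglyMeasurable (Function.uncurry f) (μ.prod ν))
    (hf_nonneg : ∀ᵐ y ∂ν, ∀ᵐ x ∂μ, 0 ≤ f x y)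
    (hf_sec : ∀ᵐ y ∂ν, Integrable (f · y) μ) (hf_int : Integrable (fun y ↦ ∫ x, f x y ∂μ) ν) :
    ∫ x, ∫ y, f x y ∂ν ∂μ = ∫ y, ∫ x, f x y ∂μ ∂ν := by
  refine integral_integral_swap ((integrable_prod_iff' hf).2 ⟨hf_sec, hf_int.congr ?_⟩)
  filter_upwards [hf_nonneg] with y hy
  exact integral_congr_ae (hy.mono fun x hx ↦ (norm_of_nonneg hx).symm)

theorem integral_pow_mul_integral_mul_exp_neg_div {w : ℝ → ℝ} (hw : Measurable w)
    (hw_nonneg : ∀ t ∈ Ioi (0 : ℝ), 0 ≤ w t) {c : ℝ} (hc : 0 < c) (n : ℕ)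
    (hw_int : IntegrableOn (fun t ↦ t ^ (n + 1) * w t) (Ioi 0)) :
    ∫ x in Ioi (0 : ℝ), x ^ n * ∫ t in Ioi (0 : ℝ), w t * exp (-(x / (c * t))) =
      n ! * c ^ (n + 1) * ∫ t in Ioi (0 : ℝ), t ^ (n + 1) * w t := by
  have inner : ∀ t ∈ Ioi (0 : ℝ), ∫ x in Ioi (0 : ℝ), x ^ n * (w t * exp (-(x / (c * t)))) =
      n ! * c ^ (n + 1) * (t ^ (n + 1) * w t) := fun t ht ↦ by
    simp_rw [mul_left_comm _ (w t)]
    rw [integral_const_mul, integral_pow_mul_exp_neg_div_Ioi n (mul_pos hc ht), mul_pow]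
    ring
  calc ∫ x in Ioi (0 : ℝ), x ^ n * ∫ t in Ioi (0 : ℝ), w t * exp (-(x / (c * t)))
      = ∫ x in Ioi (0 : ℝ), ∫ t in Ioi (0 : ℝ), x ^ n * (w t * exp (-(x / (c * t)))) := by
        simp_rw [integral_const_mul]
    _ = ∫ t in Ioi (0 : ℝ), ∫ x in Ioi (0 : ℝ), x ^ n * (w t * exp (-(x / (c * t)))) := by
        refine integral_integral_swap_of_nonneg (by fun_prop) ?_ ?_ ?_
        · filter_upwards [ae_restrict_mem measurableSet_Ioi] with t ht
          filter_upwards [ae_restrict_mem measurableSet_Ioi] with x hx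
          have := hw_nonneg t ht
          have : 0 < x := hx
          positivity
        · filter_upwards [ae_restrict_mem measurableSet_Ioi] with t ht
          exact ((integrableOn_pow_mul_exp_neg_div_Ioi n (mul_pos hc ht)).const_mul (w t)).congr
            (ae_of_all _ fun x ↦ mul_left_comm _ _ _)
        · exact (hw_int.const_mul _).congr
            ((ae_restrict_mem measurableSet_Ioi).mono fun t ht ↦ (inner t ht).symm)
    _ = n ! * c ^ (n + 1) * ∫ t in Ioi (0 : ℝ), t ^ (n + 1) * w t := by
        rw [setIntegral_congr_fun measurableSet_Ioi inner, integral_const_mul]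

lemma wrightWeight_nonneg {β ν : ℝ} (hν : 0 < ν) (x : ℝ) : 0 ≤ wrightWeight β ν x := by
  have := Gamma_pos_of_pos hν
  refine mul_nonneg (by positivity) (setIntegral_nonneg measurableSet_Ioi fun t ht ↦ ?_)
  have : 0 < t := ht
  positivity

lemma wrightWeight_eq (β ν x : ℝ) :
    wrightWeight β ν x = 1 / (β ^ 2 * Gamma ν) *
      ∫ t in Ioi (0 : ℝ), t ^ (ν / β - 2) * exp (-t ^ (1 / β)) * exp (-(x / (β * t))) := by
  simp_rw [wrightWeight, sub_eq_add_neg, exp_add, mul_assoc]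

lemma genFact_one {β : ℝ} (hβ : 0 < β) (ν : ℝ) (n : ℕ) :
    genFact 1 β ν n = β ^ n * n ! * Gamma (β * n + ν) / Gamma ν := by
  have factor : ∀ i ∈ Finset.Icc 1 n, Gamma (β * i + 1) / Gamma (β * i + 1 - 1) = β * i := by
    intro i hi
    have hβi : 0 < β * i := mul_pos hβ (by exact_mod_cast (Finset.mem_Icc.1 hi).1)
    rw [add_sub_cancel_right, Gamma_add_one hβi.ne',
      mul_div_cancel_right₀ _ (Gamma_pos_of_pos hβi).ne']
  rw [genFact, Finset.prod_congr rfl factor, Finset.prod_mul_distrib, Finset.prod_const,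
    Nat.card_Icc, Nat.add_sub_cancel, ← Nat.cast_prod, ← Finset.Ico_add_one_right_eq_Icc,
    Finset.prod_Ico_id_eq_factorial]
  simp only [add_sub_cancel_right, sub_self, zero_add]
  ring

theorem wrightWeight_solves_stieltjes_general (β ν : ℝ) (hβ0 : 0 < β) (hν : 0 < ν) :
    (∀ x : ℝ, 0 < x → 0 ≤ wrightWeight β ν x) ∧
    ∀ n : ℕ,
      (∫ x in Set.Ioi (0 : ℝ), x ^ n * wrightWeight β ν x) =
          β ^ n * n.factorial * Real.Gamma (β * n + ν) / Real.Gamma ν ∧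
        β ^ n * n.factorial * Real.Gamma (β * n + ν) / Real.Gamma ν = genFact 1 β ν n := by
  refine ⟨fun x _ ↦ wrightWeight_nonneg hν x, fun n ↦ ⟨?_, (genFact_one hβ0 ν n).symm⟩⟩
  have hs : -1 < ν / β - 2 + ↑(n + 1) := by push_cast; linarith [div_pos hν hβ0]
  have hp : 0 < 1 / β := by positivity
  simp_rw [wrightWeight_eq, mul_left_comm _ (1 / (β ^ 2 * Gamma ν))]
  have hw_nonneg : ∀ t ∈ Ioi (0 : ℝ), 0 ≤ t ^ (ν / β - 2) * exp (-t ^ (1 / β)) :=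
    fun t ht ↦ by have : 0 < t := ht; positivity
  rw [integral_const_mul, integral_pow_mul_integral_mul_exp_neg_div (by fun_prop) hw_nonneg hβ0 n
      (integrableOn_pow_mul_rpow_mul_exp_neg_rpow hp (n + 1) hs),
    integral_pow_mul_rpow_mul_exp_neg_rpow hp (n + 1) hs,
    show (ν / β - 2 + ↑(n + 1) + 1) / (1 / β) = β * n + ν by push_cast; field_simp; ring]
  have := Gamma_pos_of_pos hν
  field_simp
  ring

theorem wrightWeight_solves_stieltjes (β ν : ℝ) (hβ0 : 0 < β) (hβ1 : β ≤ 1) (hν : 0 < ν) :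
    (∀ x : ℝ, 0 < x → 0 ≤ wrightWeight β ν x) ∧
    ∀ n : ℕ,
      (∫ x in Set.Ioi (0 : ℝ), x ^ n * wrightWeight β ν x) =
          β ^ n * n.factorial * Real.Gamma (β * n + ν) / Real.Gamma ν ∧
        β ^ n * n.factorial * Real.Gamma (β * n + ν) / Real.Gamma ν = genFact 1 β ν n :=
  wrightWeight_solves_stieltjes_general β ν hβ0 hν
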